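/- Let G = ℤ^k × F with F a finite group, and let φ : G → G be an endomorphism with φ(F) ⊆ F. Let φ^{finite} : F → F be the restriction of φ to F, and let M be the integer matrix of the ℤ^k-component of φ restricted to ℤ^k. If det(I − M) ≠ 0, then R(φ) = R(φ^{finite}) · |det(I − M)|; equivalently R(φ) = R(φ^{finite}) · R(φ^∞), where φ^∞ : G/F → G/F is the induced endomorphism of the quotient G/F ≅ ℤ^k. -/

import Mathlib

/-!
Write `φ (v, f) = (α v, ψ v * φF f)` on `A × F`. Conjugating `(v, f)` by `(u, 1)` moves `v` by
`(1 - α) u`, so every `φ`-class meets the slice `{r} × F` for `r` in a transversal of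
`L = (1 - α) A`. As `1 - α` is injective, two points of one slice are `φ`-conjugate only via some
`(0, g)`, i.e. exactly when their `F`-coordinates are `φF`-conjugate. Hence the `φ`-classes are in
bijection with `{φF-classes} × A / L`, and for `A = ℤ^k` the Smith normal form gives
`|ℤ^k / (1 - M) ℤ^k| = |det (1 - M)|`.
-/

/-- Two elements `a`, `b` of a group are `φ`-conjugate if `b = γ * a * (φ γ)⁻¹` for some `γ`. -/
def phiConj {G : Type*} [Group G] (φ : G → G) (a b : G) : Prop :=
  ∃ γ : G, b = γ * a * (φ γ)⁻¹

/-- The Reidemeister number of `φ`: the number of `φ`-conjugacy classes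
(`0` if there are infinitely many). -/
noncomputable def reidemeisterNumber {G : Type*} [Group G] (φ : G → G) : ℕ :=
  Nat.card (Quot (phiConj φ))

open Multiplicative

section TwistedConjugacy

variable {G : Type*} [Group G]

theorem phiConj_equivalence (φ : G →* G) : Equivalence (phiConj φ) where
  refl a := ⟨1, by simp⟩
  symm := by
    rintro a b ⟨γ, rfl⟩
    exact ⟨γ⁻¹, by rw [map_inv]; group⟩
  trans := by
    rintro a b c ⟨γ, rfl⟩ ⟨δ, rfl⟩
    exact ⟨δ * γ, by rw [map_mul]; group⟩

theorem quot_mk_phiConj_eq_iff (φ : G →* G) (a b : G) :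
    Quot.mk (phiConj φ) a = Quot.mk (phiConj φ) b ↔ phiConj φ a b :=
  (phiConj_equivalence φ).quot_mk_eq_iff a b

end TwistedConjugacy

section SkewProduct

variable {A F : Type*} [AddCommGroup A] [Group F]
  {φ : Multiplicative A × F →* Multiplicative A × F} {α : A →+ A} {ψ : A → F} {φF : F →* F}

theorem twist_zero_eq_one (hφ : ∀ a f, φ (ofAdd a, f) = (ofAdd (α a), ψ a * φF f)) :
    ψ 0 = 1 := by
  have h := hφ 0 1
  rw [ofAdd_zero, ← Prod.one_eq_mk, map_one, map_zero, ofAdd_zero, map_one, mul_one] at h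
  exact (congrArg Prod.snd h).symm

theorem phiConj_mk_mk_iff (hφ : ∀ a f, φ (ofAdd a, f) = (ofAdd (α a), ψ a * φF f))
    (v w : A) (f f' : F) :
    phiConj φ (ofAdd v, f) (ofAdd w, f') ↔
      ∃ u g, w = v + (u - α u) ∧ f' = g * f * (ψ u * φF g)⁻¹ := by
  have conj : ∀ u g, (ofAdd u, g) * (ofAdd v, f) * (φ (ofAdd u, g))⁻¹ =
      (ofAdd (v + (u - α u)), g * f * (ψ u * φF g)⁻¹) := by
    intro u g
    rw [hφ]
    ext
    · simp only [Prod.fst_mul, Prod.fst_inv, toAdd_mul, toAdd_inv, toAdd_ofAdd]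
      abel
    · rfl
  constructor
  · rintro ⟨⟨u, g⟩, h⟩
    rw [← ofAdd_toAdd u, conj, Prod.mk.injEq] at h
    exact ⟨toAdd u, g, ofAdd.injective h.1, h.2⟩
  · rintro ⟨u, g, rfl, rfl⟩
    exact ⟨(ofAdd u, g), (conj u g).symm⟩

theorem reidemeisterNumber_eq_mul_index (hφ : ∀ a f, φ (ofAdd a, f) = (ofAdd (α a), ψ a * φF f))
    (hinj : Function.Injective (AddMonoidHom.id A - α)) :
    reidemeisterNumber φ = reidemeisterNumber φF * (AddMonoidHom.id A - α).range.index := by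
  set P := (AddMonoidHom.id A - α).range
  have hψ0 := twist_zero_eq_one hφ
  let Θ : Quot (phiConj φF) × (A ⧸ P) → Quot (phiConj φ) := fun x =>
    Quot.map (fun f => (ofAdd x.2.out, f))
      (fun f f' ⟨g, hg⟩ => (phiConj_mk_mk_iff hφ _ _ _ _).2 ⟨0, g, by simp, by simp [hψ0, hg]⟩)
      x.1
  have hΘ_inj : Function.Injective Θ := by
    rintro ⟨c, q⟩ ⟨c', q'⟩ h
    induction c using Quot.ind with | _ f => ?_
    induction c' using Quot.ind with | _ f' => ?_
    obtain ⟨u, g, hq, hf⟩ :=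
      (phiConj_mk_mk_iff hφ q.out q'.out f f').1 ((quot_mk_phiConj_eq_iff φ _ _).1 h)
    have hq' : q' = q := by
      rw [← QuotientAddGroup.out_eq' q', hq,
        QuotientAddGroup.mk_add_of_mem _ (show u - α u ∈ P from ⟨u, rfl⟩), QuotientAddGroup.out_eq']
    subst hq'
    obtain rfl : u = 0 := hinj (by simpa using hq)
    rw [hψ0, one_mul] at hf
    exact Prod.ext ((quot_mk_phiConj_eq_iff φF _ _).2 ⟨g, hf⟩) rfl
  have hΘ_surj : Function.Surjective Θ := by
    rintro x
    induction x using Quot.ind with | _ x => ?_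
    obtain ⟨m, f⟩ := x
    obtain ⟨⟨_, u, rfl⟩, hu⟩ := QuotientAddGroup.mk_out_eq_add P (toAdd m)
    refine ⟨(Quot.mk _ (f * (ψ u * φF 1)⁻¹), QuotientAddGroup.mk (toAdd m)), Eq.symm ?_⟩
    exact (quot_mk_phiConj_eq_iff φ _ _).2 <|
      (phiConj_mk_mk_iff hφ (toAdd m) _ f _).2 ⟨u, 1, hu, by rw [one_mul]⟩
  rw [reidemeisterNumber, reidemeisterNumber, AddSubgroup.index, ← Nat.card_prod]
  exact (Nat.card_eq_of_bijective Θ ⟨hΘ_inj, hΘ_surj⟩).symm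

end SkewProduct

theorem LinearMap.index_range_eq_natAbs_det {M : Type*} [AddCommGroup M] [Module.Free ℤ M]
    [Module.Finite ℤ M] (f : M →ₗ[ℤ] M) (hf : Function.Injective f) :
    (LinearMap.range f).toAddSubgroup.index = (LinearMap.det f).natAbs :=
  (Submodule.natAbs_det_equiv _ (LinearEquiv.ofInjective f hf)).symm

theorem Matrix.index_range_mulVecLin_eq_natAbs_det {n : Type*} [Fintype n] [DecidableEq n]
    (N : Matrix n n ℤ) (hN : N.det ≠ 0) :
    N.mulVecLin.toAddMonoidHom.range.index = N.det.natAbs := by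
  rw [← LinearMap.range_toAddSubgroup, ← LinearMap.det_toLin' N]
  exact LinearMap.index_range_eq_natAbs_det _ (Matrix.mulVec_injective_of_det_ne_zero hN)

theorem stmt9_general (k : ℕ) {F : Type*} [Group F]
    (φ : Multiplicative (Fin k → ℤ) × F →* Multiplicative (Fin k → ℤ) × F)
    (M : Matrix (Fin k) (Fin k) ℤ) (ψ : (Fin k → ℤ) → F) (φF : F →* F)
    (hφ : ∀ (v : Fin k → ℤ) (f : F),
      φ (Multiplicative.ofAdd v, f) = (Multiplicative.ofAdd (M.mulVec v), ψ v * φF f))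
    (hdet : (1 - M).det ≠ 0) :
    reidemeisterNumber ⇑φ = reidemeisterNumber ⇑φF * (1 - M).det.natAbs := by
  have hN : AddMonoidHom.id (Fin k → ℤ) - M.mulVecLin.toAddMonoidHom =
      (1 - M).mulVecLin.toAddMonoidHom :=
    AddMonoidHom.ext fun v => by simp
  have hinj : Function.Injective (AddMonoidHom.id (Fin k → ℤ) - M.mulVecLin.toAddMonoidHom) :=
    hN ▸ Matrix.mulVec_injective_of_det_ne_zero hdet
  rw [reidemeisterNumber_eq_mul_index (hinj := hinj) hφ, hN,
    Matrix.index_range_mulVecLin_eq_natAbs_det _ hdet]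

/-- for `G = ℤ^k × F` (`F` finite) and an endomorphism `φ` with
`φ(v,f) = (M·v, ψ(v)·φ^finite(f))` and `det(I - M) ≠ 0`,
`R(φ) = R(φ^finite) · |det(I - M)|` (and `|det(I - M)|` is the Reidemeister number of the
induced endomorphism `φ^∞` of the quotient `G/F ≅ ℤ^k`, given by `M`). -/
theorem stmt9 (k : ℕ) {F : Type*} [Group F] [Finite F]
    (φ : Multiplicative (Fin k → ℤ) × F →* Multiplicative (Fin k → ℤ) × F)
    (M : Matrix (Fin k) (Fin k) ℤ) (ψ : (Fin k → ℤ) → F) (φF : F →* F)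
    (hφ : ∀ (v : Fin k → ℤ) (f : F),
      φ (Multiplicative.ofAdd v, f) = (Multiplicative.ofAdd (M.mulVec v), ψ v * φF f))
    (hdet : (1 - M).det ≠ 0) :
    reidemeisterNumber ⇑φ = reidemeisterNumber ⇑φF * (1 - M).det.natAbs :=
  stmt9_general k φ M ψ φF hφ hdet
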